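/- Two solutions S(G × ℤ/nℤ, c) and S(G′ × ℤ/n′ℤ, c′) are isomorphic (as solutions of the Yang–Baxter equation) if and only if n = n′ and there exists a group isomorphism g : G → G′ with c′(i) = g(c(i)) for every i ∈ ℤ/nℤ. -/

import Mathlib

/-- The left translation `σ_{(a,i)}` of the solution `S(G × ℤ/nℤ, c)`. -/
def SσE {G : Type*} [AddCommGroup G] {n : ℕ} (c : ZMod n → G) (x : G × ZMod n) :
    Equiv.Perm (G × ZMod n) where
  toFun y := (y.1 + c (x.2 - y.2 - 1) - c (-y.2 - 1), y.2 + 1)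
  invFun y := (y.1 - c (x.2 - y.2) + c (-y.2), y.2 - 1)
  left_inv y := by
    obtain ⟨b, j⟩ := y
    have h1 : x.2 - (j + 1) = x.2 - j - 1 := by ring
    have h2 : -(j + 1) = -j - 1 := by ring
    simp only [h1, h2, Prod.mk.injEq]
    constructor
    · abel
    · ring
  right_inv y := by
    obtain ⟨b, j⟩ := y
    have h1 : x.2 - (j - 1) - 1 = x.2 - j := by ring
    have h2 : -(j - 1) - 1 = -j := by ring
    simp only [h1, h2, Prod.mk.injEq]
    constructor
    · abel
    · ring

/-- The permutation group of `S(G × ℤ/nℤ, c)`. -/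
def SGX {G : Type*} [AddCommGroup G] {n : ℕ} (c : ZMod n → G) :
    Subgroup (Equiv.Perm (G × ZMod n)) :=
  Subgroup.closure (Set.range (SσE c))

/-- The displacement group of `S(G × ℤ/nℤ, c)`. -/
def SDis {G : Type*} [AddCommGroup G] {n : ℕ} (c : ZMod n → G) :
    Subgroup (Equiv.Perm (G × ZMod n)) :=
  Subgroup.closure {g | ∃ x y : G × ZMod n, g = SσE c x * (SσE c y)⁻¹}

lemma SσE_apply {G : Type*} [AddCommGroup G] {n : ℕ} (c : ZMod n → G) (x y : G × ZMod n) :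
    SσE c x y = (y.1 + c (x.2 - y.2 - 1) - c (-y.2 - 1), y.2 + 1) := rfl

lemma SσE_pow_apply {G : Type*} [AddCommGroup G] {n : ℕ} (c : ZMod n → G) (x y : G × ZMod n)
    (k : ℕ) : ((SσE c x) ^ k) y
      = (y.1 + ∑ m ∈ Finset.range k,
          (c (x.2 - y.2 - 1 - (m : ZMod n)) - c (- y.2 - 1 - (m : ZMod n))), y.2 + (k : ZMod n)) := by
  induction k with
  | zero => simp
  | succ k ih =>
      rw [pow_succ', Equiv.Perm.mul_apply, ih, SσE_apply]
      refine Prod.ext ?_ ?_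
      · simp only [Finset.sum_range_succ]
        have h1 : x.2 - (y.2 + (k : ZMod n)) - 1 = x.2 - y.2 - 1 - (k : ZMod n) := by ring
        have h2 : -(y.2 + (k : ZMod n)) - 1 = -y.2 - 1 - (k : ZMod n) := by ring
        show y.1 + _ + c (x.2 - (y.2 + (k : ZMod n)) - 1) - c (-(y.2 + (k : ZMod n)) - 1) = _
        rw [h1, h2]
        abel
      · show y.2 + (k : ZMod n) + 1 = y.2 + ((k + 1 : ℕ) : ZMod n)
        push_cast
        ring

lemma sum_range_cast {G : Type*} [AddCommGroup G] {n : ℕ} [NeZero n] (f : ZMod n → G) :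
    ∑ m ∈ Finset.range n, f ((m : ZMod n)) = ∑ t : ZMod n, f t := by
  refine Finset.sum_nbij' (fun m => (m : ZMod n)) (fun t => t.val) ?_ ?_ ?_ ?_ ?_
  · intro a _; exact Finset.mem_univ _
  · intro t _; exact Finset.mem_range.2 (ZMod.val_lt t)
  · intro a ha; exact ZMod.val_cast_of_lt (Finset.mem_range.1 ha)
  · intro t _; exact ZMod.natCast_rightInverse t
  · intro a _; rfl

lemma SσE_pow_n {G : Type*} [AddCommGroup G] {n : ℕ} [NeZero n] (c : ZMod n → G)
    (x y : G × ZMod n) : ((SσE c x) ^ n) y = y := by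
  rw [SσE_pow_apply]
  refine Prod.ext ?_ ?_
  · show y.1 + _ = y.1
    rw [Finset.sum_sub_distrib]
    rw [sum_range_cast (fun t => c (x.2 - y.2 - 1 - t)),
      sum_range_cast (fun t => c (-y.2 - 1 - t))]
    have e1 : ∑ t : ZMod n, c (x.2 - y.2 - 1 - t) = ∑ t : ZMod n, c t :=
      Fintype.sum_equiv (Equiv.subLeft (x.2 - y.2 - 1)) _ _ (fun t => rfl)
    have e2 : ∑ t : ZMod n, c (-y.2 - 1 - t) = ∑ t : ZMod n, c t :=
      Fintype.sum_equiv (Equiv.subLeft (-y.2 - 1)) _ _ (fun t => rfl)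
    rw [e1, e2]
    simp
  · show y.2 + (n : ZMod n) = y.2
    simp

/-- Key lemma: an isomorphism of solutions (same `n`) yields an additive hom sending `c` to `c'`. -/
lemma key_hom {G G' : Type*} [AddCommGroup G] [AddCommGroup G'] {n : ℕ}
    (c : ZMod n → G) (c' : ZMod n → G')
    (hc0 : c 0 = 0) (hgen : AddSubgroup.closure (Set.range c) = ⊤) (hc0' : c' 0 = 0)
    (Φ : (G × ZMod n) ≃ (G' × ZMod n))
    (H : ∀ x y : G × ZMod n, Φ (SσE c x y) = SσE c' (Φ x) (Φ y)) :
    ∃ g : G →+ G', ∀ t, g (c t) = c' t := by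
  -- Fact A : the second coordinate relation
  have FactA : ∀ (b' : G) (j i : ZMod n),
      (Φ (b', j + 1)).2 = (Φ (b' - c (i - j - 1) + c (-j - 1), j)).2 + 1 := by
    intro b' j i
    have h := congrArg Prod.snd (H (0, i) (b' - c (i - j - 1) + c (-j - 1), j))
    simp only [SσE_apply] at h
    have hb : b' - c (i - j - 1) + c (-j - 1) + c (i - j - 1) - c (-j - 1) = b' := by abel
    rw [hb] at h
    exact h
  -- the second coordinate of Φ does not depend on the first coordinate
  have FactA' : ∀ (a : G) (j t : ZMod n), (Φ (a - c t, j)).2 = (Φ (a, j)).2 := by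
    intro a j t
    have h1 := FactA (a - c (-j - 1)) j (j + 1)
    have h2 := FactA (a - c (-j - 1)) j (t + j + 1)
    rw [show (j : ZMod n) + 1 - j - 1 = 0 from by ring, hc0] at h1
    rw [show t + j + 1 - j - 1 = t from by ring] at h2
    rw [show a - c (-j - 1) - 0 + c (-j - 1) = a from by abel] at h1
    rw [show a - c (-j - 1) - c t + c (-j - 1) = a - c t from by abel] at h2
    have h3 := h1.symm.trans h2
    exact (add_left_injective (1 : ZMod n) h3).symm
  have hψconst : ∀ (a : G) (j : ZMod n), (Φ (a, j)).2 = (Φ (0, j)).2 := by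
    intro a j
    have hmem : ∀ s : G, s ∈ AddSubgroup.closure (Set.range c) →
        ∀ (b : G) (j : ZMod n), (Φ (b + s, j)).2 = (Φ (b, j)).2 := by
      intro s hs
      induction hs using AddSubgroup.closure_induction with
      | mem x hx =>
          obtain ⟨t, rfl⟩ := hx
          intro b j
          have h := FactA' (b + c t) j t
          rw [show b + c t - c t = b from by abel] at h
          exact h.symm
      | zero => intro b j; rw [add_zero]
      | add x y _ _ hx hy =>
          intro b j
          rw [show b + (x + y) = b + x + y from by abel, hy, hx]
      | neg x _ hx =>
          intro b j
          have h := hx (b + -x) j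
          rw [show b + -x + x = b from by abel] at h
          exact h.symm
    have h := hmem a (hgen ▸ AddSubgroup.mem_top a) 0 j
    rwa [zero_add] at h
  have hψstep : ∀ (a : G) (j : ZMod n), (Φ (a, j + 1)).2 = (Φ (0, j)).2 + 1 := by
    intro a j
    rw [FactA a j (j + 1), hψconst]
  have hψ : ∀ (a : G) (j : ZMod n), (Φ (a, j)).2 = (Φ ((0 : G), (0 : ZMod n))).2 + j := by
    have hint : ∀ k : ℤ, (Φ ((0 : G), ((k : ℤ) : ZMod n))).2
        = (Φ ((0 : G), (0 : ZMod n))).2 + ((k : ℤ) : ZMod n) := by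
      intro k
      induction k using Int.induction_on with
      | zero => simp
      | succ k ih =>
          have hs := hψstep 0 ((k : ℤ) : ZMod n)
          have hcast : (((k : ℤ) + 1 : ℤ) : ZMod n) = ((k : ℤ) : ZMod n) + 1 := by push_cast; ring
          rw [hcast, hs, ih]
          ring
      | pred k ih =>
          have hs := hψstep 0 ((-(k : ℤ) - 1 : ℤ) : ZMod n)
          have hcast : ((-(k : ℤ) - 1 : ℤ) : ZMod n) + 1 = ((-(k : ℤ) : ℤ) : ZMod n) := by
            push_cast; ring
          rw [hcast, ih] at hs
          have hc2 : ((-(k : ℤ) : ℤ) : ZMod n) = ((-(k : ℤ) - 1 : ℤ) : ZMod n) + 1 := by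
            push_cast; ring
          linear_combination hc2 - hs
    intro a j
    obtain ⟨k, rfl⟩ := ZMod.intCast_surjective j
    rw [hψconst, hint]
  -- first coordinate relation
  have hH1 : ∀ (b : G) (i j : ZMod n),
      (Φ (b + c (i - j - 1) - c (-j - 1), j + 1)).1
        = (Φ (b, j)).1 + c' (i - j - 1) - c' (-(Φ ((0 : G), (0 : ZMod n))).2 - j - 1) := by
    intro b i j
    have h := congrArg Prod.fst (H (0, i) (b, j))
    simp only [SσE_apply] at h
    rw [hψ 0 i, hψ b j] at h
    rw [show (Φ ((0 : G), (0 : ZMod n))).2 + i - ((Φ ((0 : G), (0 : ZMod n))).2 + j) - 1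
        = i - j - 1 from by ring,
      show -((Φ ((0 : G), (0 : ZMod n))).2 + j) - 1
        = -(Φ ((0 : G), (0 : ZMod n))).2 - j - 1 from by ring] at h
    exact h
  have hstar : ∀ (b : G) (j t : ZMod n), (Φ (b + c t, j)).1 = (Φ (b, j)).1 + c' t := by
    intro b j t
    have h1 := hH1 b (t + j + 1) j
    have h2 := hH1 (b + c t) (j + 1) j
    rw [show t + j + 1 - j - 1 = t from by ring] at h1
    rw [show (j : ZMod n) + 1 - j - 1 = 0 from by ring, hc0, hc0'] at h2
    rw [show b + c t + 0 - c (-j - 1) = b + c t - c (-j - 1) from by abel] at h2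
    rw [h1, add_zero] at h2
    have h3 := congrArg
      (fun z => z + c' (-(Φ ((0 : G), (0 : ZMod n))).2 - j - 1)) h2
    simpa using h3.symm
  -- construct the additive map
  have hg0c : ∀ t, (Φ (c t, (0 : ZMod n))).1 - (Φ ((0 : G), (0 : ZMod n))).1 = c' t := by
    intro t
    have h := hstar 0 0 t
    rw [zero_add] at h
    rw [h]
    abel
  have hadd : ∀ a s : G,
      (Φ (a + s, (0 : ZMod n))).1 - (Φ ((0 : G), (0 : ZMod n))).1
        = ((Φ (a, (0 : ZMod n))).1 - (Φ ((0 : G), (0 : ZMod n))).1)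
          + ((Φ (s, (0 : ZMod n))).1 - (Φ ((0 : G), (0 : ZMod n))).1) := by
    have hmem : ∀ s : G, s ∈ AddSubgroup.closure (Set.range c) → ∀ a : G,
        (Φ (a + s, (0 : ZMod n))).1 - (Φ ((0 : G), (0 : ZMod n))).1
          = ((Φ (a, (0 : ZMod n))).1 - (Φ ((0 : G), (0 : ZMod n))).1)
            + ((Φ (s, (0 : ZMod n))).1 - (Φ ((0 : G), (0 : ZMod n))).1) := by
      intro s hs
      induction hs using AddSubgroup.closure_induction with
      | mem x hx =>
          obtain ⟨t, rfl⟩ := hx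
          intro a
          rw [hg0c t, hstar a 0 t]
          abel
      | zero =>
          intro a
          rw [add_zero]
          abel
      | add x y _ _ hx hy =>
          intro a
          have h1 := hy (a + x)
          have h2 := hx a
          have h3 := hy x
          rw [show a + (x + y) = a + x + y from by abel, h1, h2, h3]
          abel
      | neg x _ hx =>
          intro a
          have h1 := hx (a + -x)
          rw [show a + -x + x = a from by abel] at h1
          have h2 := hx (-x)
          rw [show -x + x = (0 : G) from by abel] at h2
          have e1 : (Φ (a + -x, (0 : ZMod n))).1 - (Φ ((0 : G), (0 : ZMod n))).1
              = ((Φ (a, (0 : ZMod n))).1 - (Φ ((0 : G), (0 : ZMod n))).1)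
                - ((Φ (x, (0 : ZMod n))).1 - (Φ ((0 : G), (0 : ZMod n))).1) := by
            rw [eq_sub_iff_add_eq]
            exact h1.symm
          have e2 : (Φ (-x, (0 : ZMod n))).1 - (Φ ((0 : G), (0 : ZMod n))).1
              = -((Φ (x, (0 : ZMod n))).1 - (Φ ((0 : G), (0 : ZMod n))).1) := by
            rw [eq_neg_iff_add_eq_zero]
            exact h2.symm.trans (sub_self _)
          rw [e1, e2]
          abel
    intro a s
    exact hmem s (hgen ▸ AddSubgroup.mem_top s) a
  refine ⟨AddMonoidHom.mk'
    (fun a => (Φ (a, (0 : ZMod n))).1 - (Φ ((0 : G), (0 : ZMod n))).1) hadd, hg0c⟩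

/-- Two solutions `S(G × ℤ/nℤ, c)` and `S(G' × ℤ/n'ℤ, c')` are isomorphic if and only if
`n = n'` and there is a group isomorphism `g : G ≃ G'` with `c'(i) = g(c(i))` for all `i`. -/
theorem construction_iso_iff {G G' : Type*} [AddCommGroup G] [AddCommGroup G']
    {n n' : ℕ} (hn : 1 ≤ n) (hn' : 1 ≤ n')
    (c : ZMod n → G) (c' : ZMod n' → G')
    (hc0 : c 0 = 0) (hgen : AddSubgroup.closure (Set.range c) = ⊤)
    (hc0' : c' 0 = 0) (hgen' : AddSubgroup.closure (Set.range c') = ⊤) :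
    (∃ Φ : (G × ZMod n) ≃ (G' × ZMod n'),
        ∀ x y : G × ZMod n, Φ (SσE c x y) = SσE c' (Φ x) (Φ y)) ↔
      (n = n' ∧ ∃ g : G ≃+ G', ∀ i : ℤ, c' (i : ZMod n') = g (c (i : ZMod n))) := by
  haveI : NeZero n := ⟨by omega⟩
  haveI : NeZero n' := ⟨by omega⟩
  constructor
  · rintro ⟨Φ, H⟩
    have Hsymm : ∀ x y : G' × ZMod n',
        Φ.symm (SσE c' x y) = SσE c (Φ.symm x) (Φ.symm y) := by
      intro x y
      apply Φ.injective
      rw [H, Equiv.apply_symm_apply, Equiv.apply_symm_apply, Equiv.apply_symm_apply]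
    have Hpow : ∀ (x : G × ZMod n) (k : ℕ) (y : G × ZMod n),
        Φ ((SσE c x ^ k) y) = (SσE c' (Φ x) ^ k) (Φ y) := by
      intro x k y
      induction k generalizing y with
      | zero => simp
      | succ k ih =>
          rw [pow_succ, Equiv.Perm.mul_apply, pow_succ, Equiv.Perm.mul_apply, ← H, ih]
    have Hpow' : ∀ (x : G' × ZMod n') (k : ℕ) (y : G' × ZMod n'),
        Φ.symm ((SσE c' x ^ k) y) = (SσE c (Φ.symm x) ^ k) (Φ.symm y) := by
      intro x k y
      induction k generalizing y with
      | zero => simp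
      | succ k ih =>
          rw [pow_succ, Equiv.Perm.mul_apply, pow_succ, Equiv.Perm.mul_apply, ← Hsymm, ih]
    have hdvd1 : n' ∣ n := by
      have h1 := Hpow (0, 0) n (Φ.symm ((0 : G'), (0 : ZMod n')))
      rw [SσE_pow_n, Equiv.apply_symm_apply] at h1
      have h2 := congrArg Prod.snd h1
      rw [SσE_pow_apply] at h2
      simp only at h2
      have : ((n : ℕ) : ZMod n') = 0 := by
        have := h2.symm
        rwa [zero_add] at this
      exact (ZMod.natCast_eq_zero_iff n n').1 this
    have hdvd2 : n ∣ n' := by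
      have h1 := Hpow' (0, 0) n' (Φ ((0 : G), (0 : ZMod n)))
      rw [SσE_pow_n, Equiv.symm_apply_apply] at h1
      have h2 := congrArg Prod.snd h1
      rw [SσE_pow_apply] at h2
      simp only at h2
      have : ((n' : ℕ) : ZMod n) = 0 := by
        have := h2.symm
        rwa [zero_add] at this
      exact (ZMod.natCast_eq_zero_iff n' n).1 this
    have hnn' : n = n' := Nat.dvd_antisymm hdvd2 hdvd1
    subst hnn'
    refine ⟨rfl, ?_⟩
    obtain ⟨g, hg⟩ := key_hom c c' hc0 hgen hc0' Φ H
    obtain ⟨g', hg'⟩ := key_hom c' c hc0' hgen' hc0 Φ.symm Hsymm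
    have hgg' : g'.comp g = AddMonoidHom.id G := by
      apply AddMonoidHom.eq_of_eqOn_dense hgen
      rintro x ⟨t, rfl⟩
      simp [hg, hg']
    have hg'g : g.comp g' = AddMonoidHom.id G' := by
      apply AddMonoidHom.eq_of_eqOn_dense hgen'
      rintro x ⟨t, rfl⟩
      simp [hg, hg']
    refine ⟨{ toFun := g, invFun := g',
              left_inv := fun a => DFunLike.congr_fun hgg' a,
              right_inv := fun a => DFunLike.congr_fun hg'g a,
              map_add' := g.map_add }, ?_⟩
    intro i
    exact (hg ((i : ℤ) : ZMod n)).symm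
  · rintro ⟨rfl, g, hg⟩
    have hg' : ∀ t : ZMod n, c' t = g (c t) := by
      intro t
      obtain ⟨i, rfl⟩ := ZMod.intCast_surjective t
      exact hg i
    refine ⟨Equiv.prodCongr g.toEquiv (Equiv.refl _), ?_⟩
    intro x y
    simp only [SσE_apply, Equiv.prodCongr_apply, Prod.map, Equiv.coe_refl, id]
    refine Prod.ext ?_ rfl
    simp [map_add, map_sub, hg']
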